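/- arXiv:2202.12773 — 2 statements merged into one kernel-verified Lean document; each statement's English description precedes it below -/
import Mathlib

section
/- Let n ≥ 1 and let A be an n × n matrix of nonnegative reals in which every nonzero entry lies in [1/(2n), 1/(2n) + 1/(2n^2)]. For a permutation σ of {1,…,n}, let w(σ) = Σᵢ A(i, σ(i)) and let c(σ) be the number of indices i with A(i, σ(i)) ≠ 0. Then any permutation σ* maximizing w over all permutations also maximizes c over all permutations. -/
theorem stmt_2 (n : ℕ) (hn : 1 ≤ n) (A : Matrix (Fin n) (Fin n) ℝ)
    (hA0 : ∀ i j, 0 ≤ A i j)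
    (hA : ∀ i j, A i j ≠ 0 → 1 / (2 * n) ≤ A i j ∧ A i j ≤ 1 / (2 * n) + 1 / (2 * n ^ 2))
    (σstar : Equiv.Perm (Fin n))
    (hmax : ∀ σ : Equiv.Perm (Fin n), ∑ i, A i (σ i) ≤ ∑ i, A i (σstar i)) :
    ∀ σ : Equiv.Perm (Fin n),
      {i : Fin n | A i (σ i) ≠ 0}.ncard ≤ {i : Fin n | A i (σstar i) ≠ 0}.ncard := by
  intro σ
  by_contra hcon
  push_neg at hcon
  set S : Finset (Fin n) := Finset.univ.filter (fun i => A i (σ i) ≠ 0) with hS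
  set T : Finset (Fin n) := Finset.univ.filter (fun i => A i (σstar i) ≠ 0) with hT
  have hSn : {i : Fin n | A i (σ i) ≠ 0}.ncard = S.card := by
    rw [Set.ncard_eq_toFinset_card']
    congr 1
    ext i
    simp [hS]
  have hTn : {i : Fin n | A i (σstar i) ≠ 0}.ncard = T.card := by
    rw [Set.ncard_eq_toFinset_card']
    congr 1
    ext i
    simp [hT]
  rw [hSn, hTn] at hcon
  have hTle : T.card < n := by
    have := hcon
    have h1 : S.card ≤ n := by
      simpa using Finset.card_le_card (Finset.subset_univ S)
    omega
  -- lower bound for w(σ)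
  have hlow : (S.card : ℝ) * (1 / (2 * n)) ≤ ∑ i, A i (σ i) := by
    calc (S.card : ℝ) * (1 / (2 * n)) = ∑ _i ∈ S, (1 / (2 * (n:ℝ))) := by
          rw [Finset.sum_const, nsmul_eq_mul]
      _ ≤ ∑ i ∈ S, A i (σ i) := by
          apply Finset.sum_le_sum
          intro i hi
          exact (hA i (σ i) (by simpa [hS] using hi)).1
      _ ≤ ∑ i, A i (σ i) := by
          apply Finset.sum_le_sum_of_subset_of_nonneg (Finset.subset_univ S)
          intro i _ _; exact hA0 _ _
  -- upper bound for w(σ*)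
  have hup : ∑ i, A i (σstar i) ≤ (T.card : ℝ) * (1 / (2 * n) + 1 / (2 * n ^ 2)) := by
    have hsum : ∑ i, A i (σstar i) = ∑ i ∈ T, A i (σstar i) := by
      symm
      apply Finset.sum_subset (Finset.subset_univ T)
      intro i _ hi
      by_contra h
      exact hi (by simp [hT, h])
    rw [hsum]
    calc ∑ i ∈ T, A i (σstar i)
        ≤ ∑ _i ∈ T, (1 / (2 * (n:ℝ)) + 1 / (2 * n ^ 2)) := by
          apply Finset.sum_le_sum
          intro i hi
          exact (hA i (σstar i) (by simpa [hT] using hi)).2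
      _ = (T.card : ℝ) * (1 / (2 * n) + 1 / (2 * n ^ 2)) := by
          rw [Finset.sum_const, nsmul_eq_mul]
  have hw := hmax σ
  have hk1 : (T.card : ℝ) + 1 ≤ (S.card : ℝ) := by exact_mod_cast hcon
  have hkn : (T.card : ℝ) + 1 ≤ (n : ℝ) := by exact_mod_cast hTle
  have hn1 : (1 : ℝ) ≤ (n : ℝ) := by exact_mod_cast hn
  have key : (S.card : ℝ) * (1 / (2 * n)) ≤ (T.card : ℝ) * (1 / (2 * n) + 1 / (2 * n ^ 2)) :=
    le_trans hlow (le_trans hw hup)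
  have hnpos : (0:ℝ) < (n:ℝ) := by linarith
  have key2 : (S.card : ℝ) * n ≤ T.card * (n + 1) := by
    have h2 : (0:ℝ) < 2 * (n:ℝ) ^ 2 := by positivity
    have hne : (n:ℝ) ≠ 0 := ne_of_gt hnpos
    have e1 : (S.card:ℝ) * (1 / (2 * n)) * (2 * n ^ 2) = S.card * n := by
      field_simp
    have e2 : (T.card:ℝ) * (1 / (2 * n) + 1 / (2 * n ^ 2)) * (2 * n ^ 2) = T.card * (n + 1) := by
      field_simp
    have h3 := mul_le_mul_of_nonneg_right key h2.le
    rw [e1, e2] at h3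
    exact h3
  nlinarith [key2, hk1, hkn, hnpos]
end

section
/- Let n ≥ 1 and A as above (nonzero entries in [1/(2n), 1/(2n) + 1/(2n^2)]). If permutations σ and τ satisfy c(σ) < c(τ) (τ matches strictly more nonzero entries), then w(σ) < w(τ). In particular w(σ) > w(τ) implies c(σ) ≥ c(τ). -/
/-!
Write `a = 1 / (2n)`, so that every nonzero entry lies in `[a, a + a / n]`. A permutation meeting
`s < n` nonzero entries has weight at most `s a + (s / n) a < (s + 1) a`, while one meeting at least
`s + 1` nonzero entries has weight at least `(s + 1) a`.
-/

open Function

section SupportCount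

variable {ι R : Type*} [Fintype ι] [Semiring R] [PartialOrder R] [IsOrderedAddMonoid R]
  {f : ι → R}

theorem sum_le_ncard_support_mul {b : R} (hb : ∀ i, f i ≠ 0 → f i ≤ b) :
    ∑ i, f i ≤ (support f).ncard * b := by
  classical
  rw [← Finset.sum_filter_ne_zero, support, ← Finset.coe_filter_univ, Set.ncard_coe_finset,
    ← nsmul_eq_mul]
  exact Finset.sum_le_card_nsmul _ _ _ fun i hi => hb i (Finset.mem_filter.mp hi).2

theorem ncard_support_mul_le_sum {a : R} (ha : ∀ i, f i ≠ 0 → a ≤ f i) :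
    (support f).ncard * a ≤ ∑ i, f i := by
  classical
  rw [← Finset.sum_filter_ne_zero, support, ← Finset.coe_filter_univ, Set.ncard_coe_finset,
    ← nsmul_eq_mul]
  exact Finset.card_nsmul_le_sum _ _ _ fun i hi => ha i (Finset.mem_filter.mp hi).2

end SupportCount

section

variable {K : Type*} [Field K] [LinearOrder K] [IsStrictOrderedRing K]

theorem mul_add_div_lt_mul {s t n : ℕ} (hst : s < t) (htn : t ≤ n) {a : K} (ha : 0 < a) :
    s * (a + a / n) < t * a := by
  have hsn : s < n := hst.trans_le htn
  have hn : (0 : K) < n := by exact_mod_cast (Nat.zero_le s).trans_lt hsn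
  have hsn' : (s : K) / n < 1 := (div_lt_one hn).mpr (by exact_mod_cast hsn)
  have hst' : (s : K) + 1 ≤ t := by exact_mod_cast hst
  calc (s : K) * (a + a / n) = s * a + (s / n) * a := by ring
    _ < s * a + a := by gcongr; exact (mul_lt_iff_lt_one_left ha).mpr hsn'
    _ = (s + 1) * a := by ring
    _ ≤ t * a := by gcongr

theorem sum_lt_sum_of_ncard_support_lt {ι : Type*} [Fintype ι] {f g : ι → K} {a : K}
    (ha : 0 < a) (hf : ∀ i, f i ≠ 0 → f i ≤ a + a / Fintype.card ι)
    (hg : ∀ i, g i ≠ 0 → a ≤ g i) (h : (support f).ncard < (support g).ncard) :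
    ∑ i, f i < ∑ i, g i :=
  calc ∑ i, f i ≤ (support f).ncard * (a + a / Fintype.card ι) := sum_le_ncard_support_mul hf
    _ < (support g).ncard * a := by
      rw [← Nat.card_eq_fintype_card]
      exact mul_add_div_lt_mul h (Set.ncard_le_card _) ha
    _ ≤ ∑ i, g i := ncard_support_mul_le_sum hg

end

theorem stmt_3_general (n : ℕ) (A : Matrix (Fin n) (Fin n) ℝ)
    (hA : ∀ i j, A i j ≠ 0 → 1 / (2 * n) ≤ A i j ∧ A i j ≤ 1 / (2 * n) + 1 / (2 * n ^ 2)) :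
    (∀ σ τ : Equiv.Perm (Fin n),
        {i : Fin n | A i (σ i) ≠ 0}.ncard < {i : Fin n | A i (τ i) ≠ 0}.ncard →
        ∑ i, A i (σ i) < ∑ i, A i (τ i)) ∧
    (∀ σ τ : Equiv.Perm (Fin n),
        ∑ i, A i (τ i) < ∑ i, A i (σ i) →
        {i : Fin n | A i (τ i) ≠ 0}.ncard ≤ {i : Fin n | A i (σ i) ≠ 0}.ncard) := by
  have key : ∀ σ τ : Equiv.Perm (Fin n),
      {i : Fin n | A i (σ i) ≠ 0}.ncard < {i : Fin n | A i (τ i) ≠ 0}.ncard →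
      ∑ i, A i (σ i) < ∑ i, A i (τ i) := by
    intro σ τ h
    have hn : 0 < n := by
      simpa using (Nat.zero_le _).trans_lt (h.trans_le (Set.ncard_le_card _))
    have hperturb : (1 : ℝ) / (2 * n) / Fintype.card (Fin n) = 1 / (2 * n ^ 2) := by
      rw [Fintype.card_fin, div_div]; ring
    refine sum_lt_sum_of_ncard_support_lt (by positivity) (fun i hi => ?_)
      (fun i hi => (hA i (τ i) hi).1) h
    rw [hperturb]
    exact (hA i (σ i) hi).2
  exact ⟨key, fun σ τ hw => not_lt.mp fun hc => (key σ τ hc).not_gt hw⟩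

theorem stmt_3 (n : ℕ) (hn : 1 ≤ n) (A : Matrix (Fin n) (Fin n) ℝ)
    (hA : ∀ i j, A i j ≠ 0 → 1 / (2 * n) ≤ A i j ∧ A i j ≤ 1 / (2 * n) + 1 / (2 * n ^ 2)) :
    (∀ σ τ : Equiv.Perm (Fin n),
        {i : Fin n | A i (σ i) ≠ 0}.ncard < {i : Fin n | A i (τ i) ≠ 0}.ncard →
        ∑ i, A i (σ i) < ∑ i, A i (τ i)) ∧
    (∀ σ τ : Equiv.Perm (Fin n),
        ∑ i, A i (τ i) < ∑ i, A i (σ i) →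
        {i : Fin n | A i (τ i) ≠ 0}.ncard ≤ {i : Fin n | A i (σ i) ≠ 0}.ncard) :=
  stmt_3_general n A hA
end
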